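/- (Lemma 4.3, single-cluster form.) Let X be a finite set of points in ℝ^d, C a finite nonempty set of points in ℝ^d with Φ(X, C) > 0, and let X_j ⊆ X and Y_j ⊆ X_j. Let ε ∈ (0, 1], let q ≥ 2, k ≥ 0, w ≥ 1 and b be integers with 1 ≤ b ≤ w. Suppose Φ(Y_j, C) ≥ (ε/128)·Φ(X_j, C) and Φ(X_j, C) ≥ (ε/4)·(1/(70·b·log₂ q))·Φ(X, C). If T ≥ 2¹⁰·105·w·(log₂ q)·ln(5(k+q))/ε² points are drawn independently from the D²-sampling distribution of X with respect to C, then the probability that none of them lies in Y_j is at most 1/(25(k+q)³). -/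
import Mathlib


open MeasureTheory

/-- The cost of covering `X` with a (nonempty) finite center set `C`:
`Φ(X, C) = Σ_{x∈X} min_{c∈C} ‖x − c‖²`. -/
noncomputable def cost {d : ℕ} (X C : Finset (EuclideanSpace ℝ (Fin d))) : ℝ :=
  ∑ x ∈ X, ⨅ c : {c // c ∈ C}, ‖x - (c : EuclideanSpace ℝ (Fin d))‖ ^ 2

lemma cost_single_nonneg {d : ℕ} (x : EuclideanSpace ℝ (Fin d)) (C : Finset _) :
    0 ≤ cost {x} C := by
  simp only [cost, Finset.sum_singleton]
  exact Real.iInf_nonneg fun c => by positivity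

lemma cost_eq_sum {d : ℕ} (X C : Finset (EuclideanSpace ℝ (Fin d))) :
    cost X C = ∑ x ∈ X, cost {x} C := by
  simp [cost, Finset.sum_singleton]

lemma cost_mono {d : ℕ} {X Y C : Finset (EuclideanSpace ℝ (Fin d))} (h : Y ⊆ X) :
    cost Y C ≤ cost X C := by
  rw [cost_eq_sum, cost_eq_sum]
  exact Finset.sum_le_sum_of_subset_of_nonneg h (fun x _ _ => cost_single_nonneg x C)

/-- The `D²`-sampling distribution of `X` with respect to `C`: it assigns to each `x ∈ X`
the probability `Φ({x}, C)/Φ(X, C)`. -/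
noncomputable def dsqMeasure {d : ℕ} (X C : Finset (EuclideanSpace ℝ (Fin d))) :
    Measure (EuclideanSpace ℝ (Fin d)) :=
  ∑ x ∈ X, (ENNReal.ofReal (cost {x} C / cost X C)) • Measure.dirac x

instance dsq_finite {d : ℕ} (X C : Finset (EuclideanSpace ℝ (Fin d))) :
    IsFiniteMeasure (dsqMeasure X C) := by
  constructor
  rw [dsqMeasure, Measure.finset_sum_apply]
  refine ENNReal.sum_lt_top.mpr fun x _ => ?_
  rw [Measure.smul_apply, smul_eq_mul]
  exact ENNReal.mul_lt_top ENNReal.ofReal_lt_top (by simp)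

open Classical in
lemma dsq_apply {d : ℕ} (X C : Finset (EuclideanSpace ℝ (Fin d))) {s : Set (EuclideanSpace ℝ (Fin d))}
    (hs : MeasurableSet s) :
    dsqMeasure X C s = ∑ x ∈ X.filter (· ∈ s), ENNReal.ofReal (cost {x} C / cost X C) := by
  rw [dsqMeasure, Measure.finset_sum_apply]
  rw [Finset.sum_filter]
  refine Finset.sum_congr rfl fun x _ => ?_
  rw [Measure.smul_apply, Measure.dirac_apply' _ hs, smul_eq_mul, Set.indicator_apply]
  split <;> simp

lemma dsq_compl {d : ℕ} {X Yj C : Finset (EuclideanSpace ℝ (Fin d))} (hYX : Yj ⊆ X)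
    (hX : 0 < cost X C) :
    dsqMeasure X C (↑Yj)ᶜ = ENNReal.ofReal (1 - cost Yj C / cost X C) := by
  classical
  rw [dsq_apply X C (Finset.measurableSet Yj).compl]
  have hfil : X.filter (· ∈ (↑Yj : Set _)ᶜ) = X \ Yj := by
    ext x; simp [Finset.mem_sdiff, and_comm]
  rw [Finset.filter_congr_decidable, hfil, ← ENNReal.ofReal_sum_of_nonneg (fun x _ => by
    exact div_nonneg (cost_single_nonneg x C) hX.le)]
  congr 1
  rw [← Finset.sum_div]
  have : ∑ x ∈ X \ Yj, cost {x} C = cost X C - cost Yj C := by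
    rw [cost_eq_sum X C, cost_eq_sum Yj C, eq_sub_iff_add_eq,
      Finset.sum_sdiff hYX]
  rw [this, sub_div, div_self hX.ne']


set_option maxHeartbeats 800000 in
/-- Lemma 4.3, single-cluster form: if `Φ(Y_j, C) ≥ (ε/128)·Φ(X_j, C)` and
`Φ(X_j, C) ≥ (ε/4)·(1/(70·b·log₂ q))·Φ(X, C)`, then among
`T ≥ 2¹⁰·105·w·(log₂ q)·ln(5(k+q))/ε²` independent `D²`-samples, none lies in `Y_j`
with probability at most `1/(25(k+q)³)`. -/
theorem d2_sample_hits_Yj_improved {d : ℕ} (X Xj Yj C : Finset (EuclideanSpace ℝ (Fin d)))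
    (hC : C.Nonempty) (hX : 0 < cost X C) (hXj : Xj ⊆ X) (hYj : Yj ⊆ Xj)
    (ε : ℝ) (hε : ε ∈ Set.Ioc (0 : ℝ) 1) (q k w b T : ℕ)
    (hq : 2 ≤ q) (hw : 1 ≤ w) (hb1 : 1 ≤ b) (hbw : b ≤ w)
    (h1 : cost Yj C ≥ (ε / 128) * cost Xj C)
    (h2 : cost Xj C ≥ (ε / 4) * (1 / (70 * (b : ℝ) * Real.logb 2 (q : ℝ))) * cost X C)
    (hT : (T : ℝ)
      ≥ 2 ^ 10 * 105 * (w : ℝ) * Real.logb 2 (q : ℝ) * Real.log (5 * ((k : ℝ) + (q : ℝ))) / ε ^ 2) :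
    (Measure.pi fun _ : Fin T => dsqMeasure X C)
        {ω | ∀ i, ω i ∉ (Yj : Set (EuclideanSpace ℝ (Fin d)))}
      ≤ 1 / (25 * ((k : ENNReal) + (q : ENNReal)) ^ 3) := by
  obtain ⟨hε0, hε1⟩ := hε
  set p : ℝ := cost Yj C / cost X C with hp_def
  have hset : {ω : Fin T → EuclideanSpace ℝ (Fin d) | ∀ i, ω i ∉ (Yj : Set _)}
      = Set.univ.pi (fun _ : Fin T => ((Yj : Set (EuclideanSpace ℝ (Fin d))))ᶜ) := by
    ext ω; simp [Set.mem_pi]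
  rw [hset, Measure.pi_pi]
  have hYX : Yj ⊆ X := hYj.trans hXj
  simp only [dsq_compl hYX hX, Finset.prod_const, Finset.card_univ, Fintype.card_fin]
  -- numeric facts
  have hq2 : (2:ℝ) ≤ (q:ℝ) := by exact_mod_cast hq
  have hL : (1:ℝ) ≤ Real.logb 2 (q:ℝ) := by
    rw [← Real.logb_self_eq_one (by norm_num : (1:ℝ) < 2)]
    exact (Real.logb_le_logb (by norm_num) (by norm_num) (by linarith)).mpr hq2
  have hw1 : (1:ℝ) ≤ (w:ℝ) := by exact_mod_cast hw
  have hbw' : (b:ℝ) ≤ (w:ℝ) := by exact_mod_cast hbw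
  have hb1' : (1:ℝ) ≤ (b:ℝ) := by exact_mod_cast hb1
  set L : ℝ := Real.logb 2 (q:ℝ)
  have hL0 : 0 < L := by linarith
  set s : ℝ := 5 * ((k:ℝ) + (q:ℝ)) with hs_def
  have hk0 : (0:ℝ) ≤ (k:ℝ) := Nat.cast_nonneg k
  have hs10 : (10:ℝ) ≤ s := by simp only [hs_def]; nlinarith
  have hlns : 0 < Real.log s := Real.log_pos (by linarith)
  set A : ℝ := 35840 * (w:ℝ) * L with hA_def
  have hA0 : 0 < A := by positivity
  have hyc : cost Yj C ≥ (ε/128) * ((ε/4) * (1/(70 * (b:ℝ) * L)) * cost X C) := by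
    refine le_trans (mul_le_mul_of_nonneg_left h2 (by positivity)) h1
  have h70 : (1:ℝ) ≤ 70 * (1/(70*(b:ℝ)*L)) * L * w := by
    have hb0 : (0:ℝ) < (b:ℝ) := by linarith
    have heq : 70 * (1/(70*(b:ℝ)*L)) * L * w = w/b := by field_simp
    rw [heq]
    exact (one_le_div hb0).mpr hbw'
  have key : ε^2 * cost X C ≤ cost Yj C * A := by
    calc ε^2 * cost X C = ε^2 * cost X C * 1 := by ring
      _ ≤ ε^2 * cost X C * (70 * (1/(70*(b:ℝ)*L)) * L * w) :=
          mul_le_mul_of_nonneg_left h70 (by positivity)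
      _ = (ε/128) * ((ε/4) * (1/(70*(b:ℝ)*L)) * cost X C) * A := by rw [hA_def]; ring
      _ ≤ cost Yj C * A := mul_le_mul_of_nonneg_right hyc hA0.le
  have hpA : ε^2/A ≤ p := (div_le_div_iff₀ hA0 hX).mpr key
  have hTA : 3 * A * Real.log s / ε^2 ≤ (T:ℝ) := by
    have : (3:ℝ) * A * Real.log s / ε^2
        = 2 ^ 10 * 105 * (w:ℝ) * L * Real.log s / ε^2 := by rw [hA_def]; ring
    linarith [hT, this.ge, this.le]
  have hTp : 3 * Real.log s ≤ (T:ℝ) * p := by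
    have heq : (3:ℝ) * Real.log s = (3 * A * Real.log s / ε^2) * (ε^2/A) := by
      field_simp
    rw [heq]
    exact mul_le_mul hTA hpA (by positivity) (Nat.cast_nonneg T)
  have hp1 : p ≤ 1 := (div_le_one hX).mpr (cost_mono hYX)
  have hp0 : 0 ≤ p := div_nonneg (by
    rw [cost_eq_sum]
    exact Finset.sum_nonneg fun x _ => cost_single_nonneg x C) hX.le
  have h1p : 0 ≤ 1 - p := by linarith
  have hreal : (1 - p) ^ T ≤ 1 / s ^ 3 := by
    have step1 : (1-p)^T ≤ Real.exp (-p) ^ T :=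
      pow_le_pow_left₀ h1p (by linarith [Real.add_one_le_exp (-p)]) T
    have step2 : Real.exp (-p)^T = Real.exp (-((T:ℝ)*p)) := by
      rw [← Real.exp_nat_mul]; ring_nf
    have step3 : Real.exp (-((T:ℝ)*p)) ≤ Real.exp (-(3*Real.log s)) :=
      Real.exp_le_exp.mpr (by linarith)
    have step4 : Real.exp (-(3*Real.log s)) = 1/s^3 := by
      rw [Real.exp_neg, one_div]
      congr 1
      rw [show (3:ℝ)*Real.log s = ((3:ℕ):ℝ)*Real.log s by norm_num,
        Real.exp_nat_mul, Real.exp_log (by linarith)]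
    calc (1-p)^T ≤ Real.exp (-p) ^ T := step1
      _ = Real.exp (-((T:ℝ)*p)) := step2
      _ ≤ Real.exp (-(3*Real.log s)) := step3
      _ = 1/s^3 := step4
  have hreal2 : (1 - p) ^ T ≤ 1 / (25 * ((k:ℝ)+(q:ℝ))^3) := by
    have hx : (0:ℝ) < ((k:ℝ)+(q:ℝ))^3 := by positivity
    have hsc : s^3 = 125 * ((k:ℝ)+(q:ℝ))^3 := by rw [hs_def]; ring
    refine hreal.trans ?_
    rw [hsc]
    exact one_div_le_one_div_of_le (by positivity) (by nlinarith)
  have hR : (1:ENNReal)/(25*((k:ENNReal)+(q:ENNReal))^3)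
      = ENNReal.ofReal (1/(25*((k:ℝ)+(q:ℝ))^3)) := by
    have hq0 : (0:ℝ) < (q:ℝ) := by linarith
    rw [ENNReal.ofReal_div_of_pos (by positivity), ENNReal.ofReal_one]
    congr 1
    rw [ENNReal.ofReal_mul (by norm_num), ENNReal.ofReal_pow (by positivity),
      ENNReal.ofReal_add (Nat.cast_nonneg k) hq0.le,
      ENNReal.ofReal_natCast, ENNReal.ofReal_natCast,
      show ((25:ℝ)) = ((25:ℕ):ℝ) by norm_num, ENNReal.ofReal_natCast]
    norm_num
  rw [← ENNReal.ofReal_pow h1p, hR]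
  exact ENNReal.ofReal_le_ofReal hreal2
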